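/- Let m(ζ) = (1+ζ)·μ − 1 + (2+ζ)·log(β/ζ) − 2 + ζ·(2−μ)/β with μ = 10.24 and β = 4.26645. Then m(0.19214) < 15.64; in particular there exists ζ ∈ (0, β) with m(ζ) < 16. -/
import Mathlib


/-- The weighted-sieve exponent bound `m(ζ)` in dimension `κ = 2`, with
`μ = 10.24` (the unconditional case `τ = 25/128`) and `β = 4.26645`. -/
noncomputable def mUncond (ζ : ℝ) : ℝ :=
  (1 + ζ) * 10.24 - 1 + (2 + ζ) * Real.log (4.26645 / ζ) - 2 + ζ * (2 - 10.24) / 4.26645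

private lemma sqrt_le_of_sq (a b : ℝ) (hb : 0 ≤ b) (h : a ≤ b ^ 2) :
    Real.sqrt a ≤ b := by
  calc Real.sqrt a ≤ Real.sqrt (b ^ 2) := Real.sqrt_le_sqrt h
  _ = b := Real.sqrt_sq hb

private lemma logkey : Real.log ((426645 : ℝ) / 19214) < 3.102 := by
  set y : ℝ := 426645 / 307424 with hy
  have hy0 : (0 : ℝ) < y := by norm_num [hy]
  set q : ℝ := Real.sqrt (Real.sqrt (Real.sqrt (Real.sqrt (Real.sqrt y)))) with hq
  have hq0 : 0 < q := by
    simp only [hq, Real.sqrt_pos]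
    exact hy0
  -- bound q
  have hqb : q ≤ 1.0102941 := by
    apply sqrt_le_of_sq _ _ (by norm_num)
    apply sqrt_le_of_sq _ _ (by norm_num)
    apply sqrt_le_of_sq _ _ (by norm_num)
    apply sqrt_le_of_sq _ _ (by norm_num)
    apply sqrt_le_of_sq _ _ (by norm_num)
    norm_num [hy]
  have hlogq : Real.log q ≤ 0.0102941 := by
    have := Real.log_le_sub_one_of_pos hq0
    linarith [hqb]
  have hlogy : Real.log y = 32 * Real.log q := by
    have h1 : ∀ z : ℝ, 0 ≤ z → Real.log (Real.sqrt z) = Real.log z / 2 :=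
      fun z hz => Real.log_sqrt hz
    simp only [hq]
    rw [h1 _ (by positivity), h1 _ (by positivity), h1 _ (by positivity),
      h1 _ (by positivity), h1 _ hy0.le]
    ring
  have hsplit : ((426645 : ℝ) / 19214) = 2 ^ 4 * y := by norm_num [hy]
  rw [hsplit, Real.log_mul (by norm_num) (by positivity), Real.log_pow]
  have h2 := Real.log_two_lt_d9
  rw [hlogy]
  push_cast
  nlinarith [hlogq, h2]

theorem stmt16 :
    mUncond 0.19214 < 15.64 ∧ ∃ ζ : ℝ, 0 < ζ ∧ ζ < 4.26645 ∧ mUncond ζ < 16 := by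
  have hval : mUncond 0.19214 < 15.64 := by
    unfold mUncond
    have h : (4.26645 : ℝ) / 0.19214 = 426645 / 19214 := by norm_num
    rw [h]
    nlinarith [logkey]
  exact ⟨hval, 0.19214, by norm_num, by norm_num, by linarith⟩
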